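/- Let J ∈ M_n(ℝ) be a real Jordan-type matrix with block moduli 1 < ρ_1 < ⋯ < ρ_s and for each k ≥ 1 let T_k be as in the context. Then there exist c' > 0, η > 1 and k₀ ∈ ℕ such that for every k ≥ k₀ the matrix T_k is invertible and, for every l ∈ ℕ, ‖J^{-kl}‖ ≤ c'/η^{kl} and ‖T_k^{-l}‖ ≤ c'/η^{kl}. -/

import Mathlib

open Filter MeasureTheory Metric Set Matrix
open scoped Topology ENNReal NNReal

noncomputable section

namespace FracPert

/-- View a plain vector as a point of Euclidean space. -/
def euc {n : ℕ} (v : Fin n → ℝ) : EuclideanSpace ℝ (Fin n) := WithLp.toLp 2 v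

/-- The real matrix associated with an integer matrix. -/
def intMat {n : ℕ} (T : Matrix (Fin n) (Fin n) ℤ) : Matrix (Fin n) (Fin n) ℝ :=
  T.map fun x => (x : ℝ)

/-- An integer vector as a real vector. -/
def zVec {n : ℕ} (v : Fin n → ℤ) : Fin n → ℝ := fun i => (v i : ℝ)

/-- An integer matrix is expanding if all of its complex eigenvalues have modulus `> 1`. -/
def IsExpandingZ {n : ℕ} (T : Matrix (Fin n) (Fin n) ℤ) : Prop :=
  ∀ μ : ℂ, (T.map fun x => (x : ℂ)).charpoly.IsRoot μ → 1 < ‖μ‖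

/-- A real matrix is expanding if all of its complex eigenvalues have modulus `> 1`. -/
def IsExpandingR {n : ℕ} (T : Matrix (Fin n) (Fin n) ℝ) : Prop :=
  ∀ μ : ℂ, (T.map fun x => (x : ℂ)).charpoly.IsRoot μ → 1 < ‖μ‖

/-- `F` is the self-affine set generated by the real matrix `M` and the digit set `A`:
`F` is nonempty, compact, and `F = ⋃_{a ∈ A} M⁻¹ (F + a)`. -/
def IsSelfAffineR {n : ℕ} (M : Matrix (Fin n) (Fin n) ℝ) (A : Set (Fin n → ℝ))
    (F : Set (EuclideanSpace ℝ (Fin n))) : Prop :=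
  F.Nonempty ∧ IsCompact F ∧
    F = ⋃ a ∈ A, (fun x : EuclideanSpace ℝ (Fin n) => euc (M⁻¹ *ᵥ (x + euc a))) '' F

/-- Integral self-affine set. -/
def IsSelfAffineZ {n : ℕ} (T : Matrix (Fin n) (Fin n) ℤ) (A : Set (Fin n → ℤ))
    (F : Set (EuclideanSpace ℝ (Fin n))) : Prop :=
  IsSelfAffineR (intMat T) (zVec '' A) F

/-- The iterated digit sets `A_k = {∑_{i=1}^k T^{k-i} a_i : a_i ∈ A}`. -/
def digitSetIter {n : ℕ} (T : Matrix (Fin n) (Fin n) ℤ) (A : Set (Fin n → ℤ)) (k : ℕ) :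
    Set (Fin n → ℤ) :=
  { v | ∃ a : Fin k → Fin n → ℤ, (∀ i, a i ∈ A) ∧
      v = ∑ i : Fin k, (T ^ (k - 1 - (i : ℕ))) *ᵥ a i }

/-- The iterated digit sets for a real matrix. -/
def digitSetIterR {n : ℕ} (J : Matrix (Fin n) (Fin n) ℝ) (A : Set (Fin n → ℝ)) (k : ℕ) :
    Set (Fin n → ℝ) :=
  { v | ∃ a : Fin k → Fin n → ℝ, (∀ i, a i ∈ A) ∧
      v = ∑ i : Fin k, (J ^ (k - 1 - (i : ℕ))) *ᵥ a i }

/-- The signed floor. -/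
def sfloor (t : ℝ) : ℤ := if 0 ≤ t then ⌊t⌋ else -⌊|t|⌋

/-- The signed ceiling. -/
def sceil (t : ℝ) : ℤ := if 0 ≤ t then ⌈t⌉ else -⌈|t|⌉

/-- Entrywise signed floor of a vector. -/
def sfloorVec {n : ℕ} (v : Fin n → ℝ) : Fin n → ℤ := fun i => sfloor (v i)

/-- The perturbed matrix `T_k`: the entrywise signed ceiling of `J^k`. -/
def pertMat {n : ℕ} (J : Matrix (Fin n) (Fin n) ℝ) (k : ℕ) : Matrix (Fin n) (Fin n) ℤ :=
  Matrix.of fun i j => sceil ((J ^ k) i j)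

/-- A real Jordan block for a real eigenvalue: lower triangular, `lam` on the diagonal,
`1` on the subdiagonal. -/
def realJordanBlock (d : ℕ) (lam : ℝ) : Matrix (Fin d) (Fin d) ℝ :=
  Matrix.of fun i j =>
    if (i : ℕ) = (j : ℕ) then lam else if (i : ℕ) = (j : ℕ) + 1 then 1 else 0

/-- A real Jordan block for a non-real eigenvalue `a + b i`, made of `2 × 2` blocks:
`C = [[a, -b], [b, a]]` on the block diagonal and `I₂` on the block subdiagonal. -/
def complexJordanBlock (m : ℕ) (a b : ℝ) : Matrix (Fin (2 * m)) (Fin (2 * m)) ℝ :=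
  Matrix.of fun i j =>
    if (i : ℕ) / 2 = (j : ℕ) / 2 then
      (if (i : ℕ) % 2 = (j : ℕ) % 2 then a else if (i : ℕ) % 2 = 0 then -b else b)
    else if (i : ℕ) / 2 = (j : ℕ) / 2 + 1 then
      (if (i : ℕ) % 2 = (j : ℕ) % 2 then 1 else 0)
    else 0

/-- `B` is a real Jordan-type block with eigenvalue modulus `ρ` and algebraic multiplicity
`np`. -/
def IsJordanBlock {d : ℕ} (B : Matrix (Fin d) (Fin d) ℝ) (ρ : ℝ) (np : ℕ) : Prop :=
  (d = np ∧ ∃ lam : ℝ, |lam| = ρ ∧ B = realJordanBlock d lam) ∨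
  (∃ h : d = 2 * np, ∃ a b : ℝ, b ≠ 0 ∧ Real.sqrt (a ^ 2 + b ^ 2) = ρ ∧
      B = Matrix.reindex (finCongr h).symm (finCongr h).symm (complexJordanBlock np a b))

/-- The index identification `(Σ p, Fin (d p)) ≃ Fin n` respects the block order
(lexicographic order on the sigma type). -/
def IsJordanArrangement {n s : ℕ} (d : Fin s → ℕ)
    (e : ((p : Fin s) × Fin (d p)) ≃ Fin n) : Prop :=
  ∀ x y : (p : Fin s) × Fin (d p), Sigma.Lex (· < ·) (fun _ => (· < ·)) x y → e x < e y

/-- `J` is a real Jordan-type matrix: a block diagonal matrix with real Jordan-type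
blocks whose eigenvalue moduli are `ρ 0 < ρ 1 < ⋯`, all `> 1`. -/
def IsRealJordanLike {n s : ℕ} (J : Matrix (Fin n) (Fin n) ℝ) (ρ : Fin s → ℝ) : Prop :=
  (∀ p, 1 < ρ p) ∧ StrictMono ρ ∧
  ∃ (d np : Fin s → ℕ) (B : ∀ p, Matrix (Fin (d p)) (Fin (d p)) ℝ)
    (e : ((p : Fin s) × Fin (d p)) ≃ Fin n),
    (∀ p, 0 < np p) ∧ (∀ p, IsJordanBlock (B p) (ρ p) (np p)) ∧
    IsJordanArrangement d e ∧
    J = Matrix.reindex e e (Matrix.blockDiagonal' B)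

/-- Perturbation data for an integer matrix `T`: an invertible real matrix `P` such that
`J = P⁻¹ T P` is a real Jordan-type matrix and distinct points of the lattice `P⁻¹ ℤ^n`
are at distance `> n`. -/
def IsPerturbationData {n s : ℕ} (T : Matrix (Fin n) (Fin n) ℤ)
    (P : Matrix (Fin n) (Fin n) ℝ) (ρ : Fin s → ℝ) : Prop :=
  IsUnit P ∧ IsRealJordanLike (P⁻¹ * intMat T * P) ρ ∧
    ∀ v w : Fin n → ℤ, v ≠ w →
      (n : ℝ) < ‖euc (P⁻¹ *ᵥ zVec v - P⁻¹ *ᵥ zVec w)‖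

/-- The digit sets `Ã_k = P⁻¹ A_k`. -/
def tildeDigits {n : ℕ} (T : Matrix (Fin n) (Fin n) ℤ) (A : Set (Fin n → ℤ))
    (P : Matrix (Fin n) (Fin n) ℝ) (k : ℕ) : Set (Fin n → ℝ) :=
  (fun a => P⁻¹ *ᵥ zVec a) '' digitSetIter T A k

/-- The perturbed digit sets `D_k = ⌊Ã_k⌋±`. -/
def pertDigits {n : ℕ} (T : Matrix (Fin n) (Fin n) ℤ) (A : Set (Fin n → ℤ))
    (P : Matrix (Fin n) (Fin n) ℝ) (k : ℕ) : Set (Fin n → ℤ) :=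
  sfloorVec '' tildeDigits T A P k

/-- `N(S, δ)`: the smallest number of sets of diameter at most `δ` needed to cover `S`. -/
def coverNum {n : ℕ} (S : Set (EuclideanSpace ℝ (Fin n))) (δ : ℝ) : ℕ :=
  sInf { m : ℕ | ∃ C : Fin m → Set (EuclideanSpace ℝ (Fin n)),
    (∀ i, Metric.diam (C i) ≤ δ) ∧ S ⊆ ⋃ i, C i }

/-- The lower box dimension. -/
def lowerBoxDim {n : ℕ} (S : Set (EuclideanSpace ℝ (Fin n))) : ℝ :=
  liminf (fun δ : ℝ => Real.log (coverNum S δ) / Real.log (1 / δ)) (𝓝[>] (0 : ℝ))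

/-- The upper box dimension. -/
def upperBoxDim {n : ℕ} (S : Set (EuclideanSpace ℝ (Fin n))) : ℝ :=
  limsup (fun δ : ℝ => Real.log (coverNum S δ) / Real.log (1 / δ)) (𝓝[>] (0 : ℝ))

/-- The integer lattice `ℤ^n` inside Euclidean space. -/
def intLattice (n : ℕ) : AddSubgroup (EuclideanSpace ℝ (Fin n)) where
  carrier := { v | ∀ i, ∃ m : ℤ, v i = (m : ℝ) }
  zero_mem' := fun i => ⟨0, by simp⟩
  add_mem' := by
    intro a b ha hb i
    obtain ⟨ma, hma⟩ := ha i
    obtain ⟨mb, hmb⟩ := hb i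
    exact ⟨ma + mb, by push_cast; rw [← hma, ← hmb]; rfl⟩
  neg_mem' := by
    intro a ha i
    obtain ⟨ma, hma⟩ := ha i
    exact ⟨-ma, by push_cast; rw [← hma]; rfl⟩

theorem intLattice_isClosed (n : ℕ) :
    IsClosed ((intLattice n : Set (EuclideanSpace ℝ (Fin n)))) := by
  have h : (intLattice n : Set (EuclideanSpace ℝ (Fin n))) =
      ⋂ i, (fun v : EuclideanSpace ℝ (Fin n) => v i) ⁻¹'
        (Set.range (fun m : ℤ => (m : ℝ))) := by
    ext v
    simp only [Set.mem_iInter, Set.mem_preimage, Set.mem_range]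
    constructor
    · intro hv i; obtain ⟨m, hm⟩ := hv i; exact ⟨m, hm.symm⟩
    · intro hv i; obtain ⟨m, hm⟩ := hv i; exact ⟨m, hm.symm⟩
  rw [h]
  exact isClosed_iInter fun i =>
    (Int.isClosedEmbedding_coe_real.isClosed_range).preimage
      (EuclideanSpace.proj (𝕜 := ℝ) i).continuous

/-- The `n`-torus `ℝ^n / ℤ^n` (with the quotient metric). -/
abbrev Torus (n : ℕ) := EuclideanSpace ℝ (Fin n) ⧸ intLattice n

noncomputable instance (n : ℕ) : NormedAddCommGroup (Torus n) :=
  have : IsClosed ((intLattice n : Set (EuclideanSpace ℝ (Fin n)))) := intLattice_isClosed n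
  QuotientAddGroup.instNormedAddCommGroup (intLattice n)

instance (n : ℕ) : MeasurableSpace (Torus n) := borel _
instance (n : ℕ) : BorelSpace (Torus n) := ⟨rfl⟩

/-- The quotient map `ℝ^n → 𝕋^n`. -/
def tproj (n : ℕ) : EuclideanSpace ℝ (Fin n) → Torus n := QuotientAddGroup.mk

/-- Multiplication by a matrix as an additive homomorphism of Euclidean space. -/
def mulVecAddHom {n : ℕ} (M : Matrix (Fin n) (Fin n) ℝ) :
    EuclideanSpace ℝ (Fin n) →+ EuclideanSpace ℝ (Fin n) where
  toFun v := euc (M *ᵥ v)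
  map_zero' := by
    show euc (M *ᵥ (0 : EuclideanSpace ℝ (Fin n))) = 0
    simp [euc]
  map_add' x y := by
    show euc (M *ᵥ (x + y)) = _
    rw [Matrix.mulVec_add]
    rfl

theorem intLattice_le_comap {n : ℕ} (T : Matrix (Fin n) (Fin n) ℤ) :
    intLattice n ≤ (intLattice n).comap (mulVecAddHom (intMat T)) := by
  intro v hv
  intro i
  choose m hm using hv
  refine ⟨∑ j, T i j * m j, ?_⟩
  show (intMat T *ᵥ v) i = _
  simp only [intMat, Matrix.mulVec, dotProduct, Matrix.map_apply]
  push_cast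
  refine Finset.sum_congr rfl fun j _ => ?_
  rw [hm j]

/-- The toral endomorphism induced by an integer matrix `T`, determined by
`φ_T (π x) = π (T x)`. -/
def torusMap {n : ℕ} (T : Matrix (Fin n) (Fin n) ℤ) : Torus n → Torus n :=
  QuotientAddGroup.map (intLattice n) (intLattice n) (mulVecAddHom (intMat T))
    (intLattice_le_comap T)

/-- `μ` is invariant under `f`. -/
def MeasInvariant {α : Type*} [MeasurableSpace α] (f : α → α) (μ : Measure α) : Prop :=
  ∀ B : Set α, MeasurableSet B → μ (f ⁻¹' B) = μ B

/-- `μ` is an ergodic invariant measure for `f`. -/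
def MeasErgodic {α : Type*} [MeasurableSpace α] (f : α → α) (μ : Measure α) : Prop :=
  MeasInvariant f μ ∧ ∀ B : Set α, MeasurableSet B → f ⁻¹' B = B → μ B = 0 ∨ μ B = 1

/-- The (Euclidean) operator norm of a real matrix. -/
def opNorm {n : ℕ} (M : Matrix (Fin n) (Fin n) ℝ) : ℝ :=
  sSup { t : ℝ | ∃ v : EuclideanSpace ℝ (Fin n), ‖v‖ ≤ 1 ∧ t = ‖euc (M *ᵥ v)‖ }

/-- The smallest modulus of a complex eigenvalue of an integer matrix. -/
def minMod {n : ℕ} (M : Matrix (Fin n) (Fin n) ℤ) : ℝ :=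
  sInf { r : ℝ | ∃ μ : ℂ, (M.map fun x => (x : ℂ)).charpoly.IsRoot μ ∧ r = ‖μ‖ }

/-- The largest modulus of a complex eigenvalue of an integer matrix. -/
def maxMod {n : ℕ} (M : Matrix (Fin n) (Fin n) ℤ) : ℝ :=
  sSup { r : ℝ | ∃ μ : ℂ, (M.map fun x => (x : ℂ)).charpoly.IsRoot μ ∧ r = ‖μ‖ }

/-!
Fix `1 < θ < ρ_1`. Rescaling the coordinates of the `j`-th diagonal (`1 × 1` or `2 × 2`) block
of a real Jordan block by `ε ^ j` turns its subdiagonal identity blocks into `ε • I`, while its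
diagonal part multiplies Euclidean norms by exactly `ρ_p`. For small `ε` the block therefore
stretches the rescaled norm by at least `θ`, and since the rescaled norm is equivalent to the
Euclidean one, `‖J ^ m v‖ ≥ θ ^ m ‖v‖ / C`. The entries of `T_k - J ^ k` lie in `[-1, 1]`, so this
perturbation has norm at most `n ^ 2`, and for large `k` the matrix `T_k` stretches every vector
by at least `η ^ k` for a fixed `1 < η < θ`. A matrix stretching every vector by `β > 0` is
invertible with inverse of norm at most `β⁻¹`, which gives both estimates.
-/

lemma euc_add {n : ℕ} (v w : Fin n → ℝ) : euc (v + w) = euc v + euc w := rfl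

lemma euc_smul {n : ℕ} (c : ℝ) (v : Fin n → ℝ) : euc (c • v) = c • euc v := rfl

lemma sub_mul_le_norm_add {E : Type*} [SeminormedAddCommGroup E] {x y : E} {a b r : ℝ}
    (hx : a * r ≤ ‖x‖) (hy : ‖y‖ ≤ b * r) : (a - b) * r ≤ ‖x + y‖ := by
  linarith [norm_le_add_norm_add x y]

lemma norm_toLp_le_sum_abs {ι : Type*} [Fintype ι] (x : ι → ℝ) :
    ‖WithLp.toLp 2 x‖ ≤ ∑ i, |x i| := by
  rw [EuclideanSpace.norm_eq, Real.sqrt_le_left (by positivity)]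
  simpa using Finset.sum_sq_le_sq_sum_of_nonneg (s := Finset.univ) fun i _ => abs_nonneg (x i)

lemma norm_toLp_le_of_abs_le_mul {ι : Type*} [Fintype ι] {x y : ι → ℝ} {c : ℝ} (hc : 0 ≤ c)
    (h : ∀ i, |x i| ≤ c * |y i|) : ‖WithLp.toLp 2 x‖ ≤ c * ‖WithLp.toLp 2 y‖ := by
  rw [EuclideanSpace.norm_eq, EuclideanSpace.norm_eq, ← Real.sqrt_sq hc,
    ← Real.sqrt_mul (sq_nonneg c), Finset.mul_sum]
  gcongr with i
  simpa [mul_pow] using pow_le_pow_left₀ (abs_nonneg _) (h i) 2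

lemma norm_mulVec_le_of_abs_le_one {m n : Type*} [Fintype m] [Fintype n] {A : Matrix m n ℝ}
    (hA : ∀ i j, |A i j| ≤ 1) (v : n → ℝ) :
    ‖WithLp.toLp 2 (A *ᵥ v)‖ ≤ Fintype.card m * Fintype.card n * ‖WithLp.toLp 2 v‖ := by
  have hrow : ∀ i, |(A *ᵥ v) i| ≤ Fintype.card n * ‖WithLp.toLp 2 v‖ := fun i =>
    calc |∑ j, A i j * v j| ≤ ∑ j, |A i j * v j| := Finset.abs_sum_le_sum_abs _ _
      _ ≤ ∑ _j : n, ‖WithLp.toLp 2 v‖ := Finset.sum_le_sum fun j _ => by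
          rw [abs_mul]
          simpa using mul_le_mul (hA i j) (PiLp.norm_apply_le (WithLp.toLp 2 v) j)
            (abs_nonneg _) zero_le_one
      _ = Fintype.card n * ‖WithLp.toLp 2 v‖ := by simp
  calc ‖WithLp.toLp 2 (A *ᵥ v)‖ ≤ ∑ i, |(A *ᵥ v) i| := norm_toLp_le_sum_abs _
    _ ≤ ∑ _i : m, Fintype.card n * ‖WithLp.toLp 2 v‖ := Finset.sum_le_sum fun i _ => hrow i
    _ = _ := by simp [mul_assoc]

lemma exists_gt_forall_lt {ι : Type*} [Finite ι] {f : ι → ℝ} {x : ℝ} (h : ∀ i, x < f i) :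
    ∃ y, x < y ∧ ∀ i, y < f i :=
  (eventually_mem_nhdsWithin.and (Filter.eventually_all.2 fun i =>
    nhdsWithin_le_nhds (eventually_lt_nhds (h i)))).exists (f := 𝓝[>] x)

lemma eventually_pow_add_le_mul_pow {η θ K c : ℝ} (hη : 1 ≤ η) (hηθ : η < θ) (hK : 0 ≤ K)
    (hc : 0 < c) : ∀ᶠ k : ℕ in atTop, η ^ k + K ≤ c * θ ^ k := by
  have hη0 : 0 < η := by linarith
  have hlim : Tendsto (fun k : ℕ => (θ / η) ^ k) atTop atTop :=
    tendsto_pow_atTop_atTop_of_one_lt ((one_lt_div hη0).2 hηθ)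
  filter_upwards [hlim.eventually_ge_atTop ((1 + K) / c)] with k hk
  have h1 : 1 ≤ η ^ k := one_le_pow₀ hη
  calc η ^ k + K ≤ (1 + K) * η ^ k := by nlinarith
    _ ≤ c * (θ / η) ^ k * η ^ k := by
        gcongr
        rwa [div_le_iff₀' hc] at hk
    _ = c * θ ^ k := by rw [div_pow, mul_assoc, div_mul_cancel₀ _ (by positivity)]

def ExpandsBy {ι : Type*} [Fintype ι] (N : (ι → ℝ) → ℝ) (M : Matrix ι ι ℝ) (c : ℝ) : Prop :=
  ∀ v, c * N v ≤ N (M *ᵥ v)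

namespace ExpandsBy

variable {ι : Type*} [Fintype ι] {N : (ι → ℝ) → ℝ} {M : Matrix ι ι ℝ} {c : ℝ}

lemma mono {c' : ℝ} (h : ExpandsBy N M c) (hc : c' ≤ c) (hN : ∀ v, 0 ≤ N v) :
    ExpandsBy N M c' :=
  fun v => (mul_le_mul_of_nonneg_right hc (hN v)).trans (h v)

lemma pow [DecidableEq ι] (h : ExpandsBy N M c) (hc : 0 ≤ c) (m : ℕ) :
    ExpandsBy N (M ^ m) (c ^ m) := by
  induction m with
  | zero => simp [ExpandsBy]
  | succ m ih =>
    intro v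
    calc c ^ (m + 1) * N v = c ^ m * (c * N v) := by ring
      _ ≤ c ^ m * N (M *ᵥ v) := by gcongr; exact h v
      _ ≤ N (M ^ m *ᵥ (M *ᵥ v)) := ih _
      _ = N (M ^ (m + 1) *ᵥ v) := by rw [pow_succ, Matrix.mulVec_mulVec]

end ExpandsBy

section Euclidean

variable {n : ℕ} {A E : Matrix (Fin n) (Fin n) ℝ} {β γ : ℝ}

lemma ExpandsBy.add (hA : ExpandsBy (fun v => ‖euc v‖) A β)
    (hE : ∀ v, ‖euc (E *ᵥ v)‖ ≤ γ * ‖euc v‖) : ExpandsBy (fun v => ‖euc v‖) (A + E) (β - γ) :=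
  fun v => by
    simp only [Matrix.add_mulVec, euc_add]
    exact sub_mul_le_norm_add (hA v) (hE v)

lemma ExpandsBy.isUnit (h : ExpandsBy (fun v => ‖euc v‖) A β) (hβ : 0 < β) : IsUnit A := by
  refine Matrix.mulVec_injective_iff_isUnit.1 fun v w hvw => ?_
  have h0 := h (v - w)
  rw [Matrix.mulVec_sub, hvw, sub_self] at h0
  have : euc (v - w) = 0 := by
    refine norm_le_zero_iff.1 (nonpos_of_mul_nonpos_right (h0.trans_eq ?_) hβ)
    simp [euc]
  exact sub_eq_zero.1 (congrArg WithLp.ofLp this)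

lemma ExpandsBy.opNorm_inv_le (h : ExpandsBy (fun v => ‖euc v‖) A β) (hβ : 0 < β) :
    opNorm A⁻¹ ≤ β⁻¹ := by
  refine Real.sSup_le ?_ (inv_nonneg.2 hβ.le)
  rintro t ⟨v, hv, rfl⟩
  have hv' := h (A⁻¹ *ᵥ v)
  rw [Matrix.mulVec_mulVec, Matrix.mul_nonsing_inv _ ((Matrix.isUnit_iff_isUnit_det A).1
    (h.isUnit hβ)), Matrix.one_mulVec] at hv'
  calc ‖euc (A⁻¹ *ᵥ v)‖ = β⁻¹ * (β * ‖euc (A⁻¹ *ᵥ v)‖) := by field_simp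
    _ ≤ β⁻¹ * 1 := by gcongr; exact hv'.trans hv
    _ = β⁻¹ := mul_one _

end Euclidean

section Scaled

variable {ι κ : Type*} [Fintype ι] [Fintype κ]

def scaledNorm (σ v : ι → ℝ) : ℝ := ‖WithLp.toLp 2 (σ * v)‖

lemma scaledNorm_nonneg (σ v : ι → ℝ) : 0 ≤ scaledNorm σ v := norm_nonneg _

lemma mul_norm_le_scaledNorm {σ : ι → ℝ} {a : ℝ} (ha : 0 ≤ a) (h : ∀ i, a ≤ σ i) (v : ι → ℝ) :
    a * ‖WithLp.toLp 2 v‖ ≤ scaledNorm σ v := by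
  rw [← abs_of_nonneg ha, ← Real.norm_eq_abs, ← norm_smul, ← WithLp.toLp_smul]
  refine (norm_toLp_le_of_abs_le_mul zero_le_one fun i => ?_).trans_eq (one_mul _)
  simpa [abs_mul] using mul_le_mul_of_nonneg_right (abs_le_abs_of_nonneg ha (h i)) (abs_nonneg _)

lemma scaledNorm_le_mul_norm {σ : ι → ℝ} {b : ℝ} (hb : 0 ≤ b) (h : ∀ i, |σ i| ≤ b) (v : ι → ℝ) :
    scaledNorm σ v ≤ b * ‖WithLp.toLp 2 v‖ :=
  norm_toLp_le_of_abs_le_mul hb fun i => by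
    simpa [abs_mul] using mul_le_mul_of_nonneg_right (h i) (abs_nonneg (v i))

lemma scaledNorm_comp_equiv (e : ι ≃ κ) (σ f : κ → ℝ) :
    scaledNorm (σ ∘ e) (f ∘ e) = scaledNorm σ f := by
  simp only [scaledNorm, EuclideanSpace.norm_eq]
  congr 1
  exact e.sum_comp fun i => ‖(σ * f) i‖ ^ 2

lemma ExpandsBy.reindex (e : ι ≃ κ) {M : Matrix ι ι ℝ} {σ : ι → ℝ} {c : ℝ}
    (h : ExpandsBy (scaledNorm σ) M c) :
    ExpandsBy (scaledNorm (σ ∘ e.symm)) (Matrix.reindex e e M) c := fun w =>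
  calc c * scaledNorm (σ ∘ e.symm) w = c * scaledNorm σ (w ∘ e) := by
        rw [← scaledNorm_comp_equiv e.symm σ (w ∘ e), Function.comp_assoc, e.self_comp_symm,
          Function.comp_id]
    _ ≤ scaledNorm σ (M *ᵥ (w ∘ e)) := h _
    _ = scaledNorm (σ ∘ e.symm) (Matrix.reindex e e M *ᵥ w) := by
        rw [Matrix.reindex_apply, Matrix.submatrix_mulVec_equiv, Equiv.symm_symm,
          scaledNorm_comp_equiv]

lemma blockDiagonal'_mulVec_apply {o : Type*} [Fintype o] [DecidableEq o] {m : o → Type*}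
    [∀ p, Fintype (m p)] (B : ∀ p, Matrix (m p) (m p) ℝ) (v : (Σ p, m p) → ℝ) (p : o)
    (i : m p) : (Matrix.blockDiagonal' B *ᵥ v) ⟨p, i⟩ = (B p *ᵥ fun j => v ⟨p, j⟩) i := by
  simp [Matrix.mulVec, dotProduct, Fintype.sum_sigma, Matrix.blockDiagonal'_apply]

lemma ExpandsBy.blockDiagonal' {o : Type*} [Fintype o] [DecidableEq o] {m : o → Type*}
    [∀ p, Fintype (m p)] {B : ∀ p, Matrix (m p) (m p) ℝ} {σ : ∀ p, m p → ℝ} {c : ℝ}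
    (hc : 0 ≤ c) (h : ∀ p, ExpandsBy (scaledNorm (σ p)) (B p) c) :
    ExpandsBy (scaledNorm fun x => σ x.1 x.2) (Matrix.blockDiagonal' B) c := by
  have hsq : ∀ w : (Σ p, m p) → ℝ, scaledNorm (fun x => σ x.1 x.2) w ^ 2
      = ∑ p, scaledNorm (σ p) (fun i => w ⟨p, i⟩) ^ 2 := fun w => by
    simp only [scaledNorm, EuclideanSpace.real_norm_sq_eq, Fintype.sum_sigma]
    rfl
  intro v
  rw [← pow_le_pow_iff_left₀ (mul_nonneg hc (scaledNorm_nonneg _ _)) (scaledNorm_nonneg _ _)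
    two_ne_zero, mul_pow, hsq, hsq, Finset.mul_sum]
  gcongr with p
  rw [← mul_pow, funext (blockDiagonal'_mulVec_apply B v p)]
  exact pow_le_pow_left₀ (mul_nonneg hc (scaledNorm_nonneg _ _)) (h p _) 2

end Scaled

lemma mul_mulVec_eq_smul_mulVec_mul {ι : Type*} [Fintype ι] {M : Matrix ι ι ℝ} {σ : ι → ℝ}
    {c : ℝ} (h : ∀ i j, M i j ≠ 0 → σ i = c * σ j) (u : ι → ℝ) :
    σ * (M *ᵥ u) = c • (M *ᵥ (σ * u)) := by
  ext i
  simp only [Pi.mul_apply, Pi.smul_apply, smul_eq_mul, Matrix.mulVec, dotProduct,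
    Finset.mul_sum]
  refine Finset.sum_congr rfl fun j _ => ?_
  by_cases hij : M i j = 0
  · simp [hij]
  · rw [h i j hij]
    ring

def shiftMatrix (d t : ℕ) : Matrix (Fin d) (Fin d) ℝ :=
  Matrix.of fun i j => if (i : ℕ) = j + t then 1 else 0

def blockScale (d t : ℕ) (ε : ℝ) : Fin d → ℝ := fun i => ε ^ ((i : ℕ) / t)

lemma blockScale_mul_shiftMatrix_mulVec {d t : ℕ} (ht : 0 < t) (ε : ℝ) (u : Fin d → ℝ) :
    blockScale d t ε * (shiftMatrix d t *ᵥ u)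
      = ε • (shiftMatrix d t *ᵥ (blockScale d t ε * u)) :=
  mul_mulVec_eq_smul_mulVec_mul (fun i j hij => by
    have hi : (i : ℕ) = j + t := by
      by_contra h
      simp [shiftMatrix, h] at hij
    rw [blockScale, blockScale, hi, Nat.add_div_right _ ht, pow_succ']) u

lemma expandsBy_blockScale_add_shiftMatrix {d t : ℕ} (ht : 0 < t) {D : Matrix (Fin d) (Fin d) ℝ}
    {ρ ε : ℝ} (hε : 0 ≤ ε) (hD : ExpandsBy (fun v => ‖euc v‖) D ρ)
    (hDσ : ∀ z, blockScale d t ε * (D *ᵥ z) = D *ᵥ (blockScale d t ε * z)) :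
    ExpandsBy (scaledNorm (blockScale d t ε)) (D + shiftMatrix d t) (ρ - ε * d ^ 2) := by
  intro u
  have hS : ‖euc (ε • (shiftMatrix d t *ᵥ (blockScale d t ε * u)))‖
      ≤ ε * d ^ 2 * scaledNorm (blockScale d t ε) u := by
    rw [euc_smul, norm_smul, Real.norm_of_nonneg hε, mul_assoc]
    gcongr
    have hentry : ∀ i j, |shiftMatrix d t i j| ≤ 1 := fun i j => by
      simp only [shiftMatrix, Matrix.of_apply]
      split_ifs <;> simp
    simpa [sq, euc, scaledNorm] using norm_mulVec_le_of_abs_le_one hentry (blockScale d t ε * u)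
  change _ ≤ ‖euc _‖
  rw [Matrix.add_mulVec, mul_add, hDσ, blockScale_mul_shiftMatrix_mulVec ht, euc_add]
  exact sub_mul_le_norm_add (hD _) hS

lemma realJordanBlock_eq (d : ℕ) (lam : ℝ) :
    realJordanBlock d lam = lam • 1 + shiftMatrix d 1 := by
  ext i j
  simp only [realJordanBlock, shiftMatrix, Matrix.of_apply, Matrix.add_apply, Matrix.smul_apply,
    Matrix.one_apply, Fin.ext_iff, smul_eq_mul]
  split_ifs <;> first | omega | ring

def pairSwap (m : ℕ) : Equiv.Perm (Fin (2 * m)) :=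
  Function.Involutive.toPerm (fun i => ⟨2 * ((i : ℕ) / 2) + (1 - (i : ℕ) % 2), by omega⟩)
    fun i => by ext; simp only; omega

lemma pairSwap_val {m : ℕ} (i : Fin (2 * m)) :
    (pairSwap m i : ℕ) = 2 * ((i : ℕ) / 2) + (1 - (i : ℕ) % 2) := rfl

def pairSign (m : ℕ) : Fin (2 * m) → ℝ := fun i => if (i : ℕ) % 2 = 0 then -1 else 1

/-- The block diagonal `diag(C, …, C)`, `C = [[a, -b], [b, a]]`, of `complexJordanBlock m a b`. -/
def pairRotation (m : ℕ) (a b : ℝ) : Matrix (Fin (2 * m)) (Fin (2 * m)) ℝ :=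
  a • 1 + b • (Matrix.diagonal (pairSign m) * (pairSwap m).permMatrix ℝ)

lemma complexJordanBlock_eq (m : ℕ) (a b : ℝ) :
    complexJordanBlock m a b = pairRotation m a b + shiftMatrix (2 * m) 2 := by
  ext i j
  simp [complexJordanBlock, pairRotation, shiftMatrix, pairSign, Matrix.one_apply, Fin.ext_iff,
    PEquiv.toMatrix_apply, Matrix.diagonal_mul, pairSwap_val]
  split_ifs <;> first | omega | ring

lemma norm_smul_add_smul_mul_comp {ι : Type*} [Fintype ι] (p : Equiv.Perm ι)
    (hp : Function.Involutive p) {s : ι → ℝ} (hs : ∀ i, s i ^ 2 = 1) (hsp : ∀ i, s (p i) = -s i)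
    (a b : ℝ) (z : ι → ℝ) :
    ‖WithLp.toLp 2 (a • z + b • (s * (z ∘ p)))‖ = √(a ^ 2 + b ^ 2) * ‖WithLp.toLp 2 z‖ := by
  have hswap : ∑ i, z (p i) ^ 2 = ∑ i, z i ^ 2 := Equiv.sum_comp p fun i => z i ^ 2
  -- The summand changes sign under `i ↦ p i`.
  have hcross : ∑ i, s i * z i * z (p i) = 0 := by
    have h := Equiv.sum_comp p fun i => s i * z i * z (p i)
    simp only [hsp, hp _] at h
    simp only [neg_mul, Finset.sum_neg_distrib, mul_right_comm _ (z (p _))] at h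
    linarith
  rw [← sq_eq_sq₀ (norm_nonneg _) (by positivity), mul_pow, Real.sq_sqrt (by positivity),
    EuclideanSpace.real_norm_sq_eq, EuclideanSpace.real_norm_sq_eq]
  have hexp : ∀ i, (a * z i + b * (s i * z (p i))) ^ 2
      = a ^ 2 * z i ^ 2 + b ^ 2 * z (p i) ^ 2 + 2 * a * b * (s i * z i * z (p i)) := fun i => by
    linear_combination (b ^ 2 * z (p i) ^ 2) * hs i
  simp only [Pi.add_apply, Pi.smul_apply, Pi.mul_apply, Function.comp_apply,
    smul_eq_mul, hexp, Finset.sum_add_distrib, ← Finset.mul_sum, hswap, hcross]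
  ring

lemma pairRotation_mulVec (m : ℕ) (a b : ℝ) (z : Fin (2 * m) → ℝ) :
    pairRotation m a b *ᵥ z = a • z + b • (pairSign m * (z ∘ pairSwap m)) := by
  rw [pairRotation, Matrix.add_mulVec, Matrix.smul_mulVec, Matrix.smul_mulVec,
    Matrix.one_mulVec, ← Matrix.mulVec_mulVec, Matrix.permMatrix_mulVec]
  congr 2
  ext i
  exact Matrix.mulVec_diagonal _ _ i

lemma norm_pairRotation_mulVec (m : ℕ) (a b : ℝ) (z : Fin (2 * m) → ℝ) :
    ‖euc (pairRotation m a b *ᵥ z)‖ = √(a ^ 2 + b ^ 2) * ‖euc z‖ := by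
  rw [pairRotation_mulVec]
  refine norm_smul_add_smul_mul_comp _ (fun i => ?_) (fun i => ?_) (fun i => ?_) a b z
  · ext
    simp only [pairSwap_val]
    omega
  · simp only [pairSign]
    split_ifs <;> norm_num
  · have hpar : (pairSwap m i : ℕ) % 2 = 0 ↔ ¬(i : ℕ) % 2 = 0 := by
      rw [pairSwap_val]
      omega
    simp only [pairSign, hpar]
    split_ifs <;> norm_num

lemma blockScale_mul_pairRotation_mulVec (m : ℕ) (a b ε : ℝ) (z : Fin (2 * m) → ℝ) :
    blockScale (2 * m) 2 ε * (pairRotation m a b *ᵥ z)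
      = pairRotation m a b *ᵥ (blockScale (2 * m) 2 ε * z) := by
  have hσ : ∀ i, blockScale (2 * m) 2 ε (pairSwap m i) = blockScale (2 * m) 2 ε i := fun i => by
    simp only [blockScale, pairSwap_val]
    congr 1
    omega
  ext i
  simp only [pairRotation_mulVec, Pi.mul_apply, Pi.add_apply, Pi.smul_apply, smul_eq_mul,
    Function.comp_apply, hσ]
  ring

lemma IsJordanBlock.exists_expandsBy {d np : ℕ} {B : Matrix (Fin d) (Fin d) ℝ} {ρ θ : ℝ}
    (hB : IsJordanBlock B ρ np) (hθ : θ < ρ) :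
    ∃ σ : Fin d → ℝ, (∀ i, 0 < σ i) ∧ ExpandsBy (scaledNorm σ) B θ := by
  set ε := (ρ - θ) / (d ^ 2 + 1) with hε_def
  have hε : 0 < ε := div_pos (sub_pos.2 hθ) (by positivity)
  have hθε : θ ≤ ρ - ε * d ^ 2 := by
    have : ε * d ^ 2 ≤ ρ - θ := by
      rw [hε_def, div_mul_eq_mul_div, div_le_iff₀ (by positivity)]
      nlinarith [sub_pos.2 hθ]
    linarith
  have hσ : ∀ t i, 0 < blockScale d t ε i := fun _ _ => pow_pos hε _
  rcases hB with ⟨-, lam, rfl, rfl⟩ | ⟨rfl, a, b, -, rfl, rfl⟩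
  · refine ⟨blockScale d 1 ε, hσ 1, ?_⟩
    rw [realJordanBlock_eq]
    refine (expandsBy_blockScale_add_shiftMatrix one_pos hε.le (fun z => ?_) (fun z => ?_)).mono
      hθε (scaledNorm_nonneg _)
    · simp [Matrix.smul_mulVec, euc_smul, norm_smul]
    · simp [Matrix.smul_mulVec]
  · refine ⟨blockScale (2 * np) 2 ε, hσ 2, ?_⟩
    rw [finCongr_refl, Equiv.refl_symm, Matrix.reindex_refl_refl, complexJordanBlock_eq]
    refine (expandsBy_blockScale_add_shiftMatrix two_pos hε.le (fun z => ?_)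
      (blockScale_mul_pairRotation_mulVec np a b ε)).mono hθε (scaledNorm_nonneg _)
    exact (norm_pairRotation_mulVec np a b z).ge

theorem IsRealJordanLike.exists_expandsBy_pow {n s : ℕ} {J : Matrix (Fin n) (Fin n) ℝ}
    {ρ : Fin s → ℝ} (hJ : IsRealJordanLike J ρ) :
    ∃ θ C : ℝ, 1 < θ ∧ 0 < C ∧ ∀ m, ExpandsBy (fun v => ‖euc v‖) (J ^ m) (θ ^ m / C) := by
  obtain ⟨hρ, -, d, np, B, e, -, hB, -, hJB⟩ := hJ
  obtain ⟨θ, hθ, hθρ⟩ := exists_gt_forall_lt hρ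
  choose σ hσ hBσ using fun p => (hB p).exists_expandsBy (hθρ p)
  set W : Fin n → ℝ := (fun x => σ x.1 x.2) ∘ e.symm
  have hJW : ∀ m, ExpandsBy (scaledNorm W) (J ^ m) (θ ^ m) := by
    rw [hJB]
    exact ((ExpandsBy.blockDiagonal' (by linarith) hBσ).reindex e).pow (by linarith)
  obtain ⟨a, ha, haW⟩ := exists_gt_forall_lt (x := 0) (f := W) fun _ => hσ _ _
  obtain ⟨b, hbW⟩ := Finite.exists_le W
  have hb : 0 < max b 1 := by positivity
  refine ⟨θ, max b 1 / a, hθ, by positivity, fun m v => ?_⟩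
  have hlow := mul_norm_le_scaledNorm ha.le (fun i => (haW i).le) v
  have hup := scaledNorm_le_mul_norm hb.le
    (fun i => (abs_of_pos (hσ _ _)).trans_le ((hbW i).trans (le_max_left b 1))) (J ^ m *ᵥ v)
  calc θ ^ m / (max b 1 / a) * ‖euc v‖ = θ ^ m * (a * ‖euc v‖) / max b 1 := by
        field_simp
    _ ≤ θ ^ m * scaledNorm W v / max b 1 := by gcongr; exact hlow
    _ ≤ scaledNorm W (J ^ m *ᵥ v) / max b 1 := by gcongr; exact hJW m v
    _ ≤ ‖euc (J ^ m *ᵥ v)‖ := by rw [div_le_iff₀' hb]; exact hup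

lemma abs_sceil_sub_le (t : ℝ) : |(sceil t : ℝ) - t| ≤ 1 := by
  unfold sceil
  split_ifs with h
  · rw [abs_le]
    constructor <;> linarith [Int.le_ceil t, Int.ceil_lt_add_one t]
  · rw [abs_of_neg (not_le.1 h), abs_le]
    push_cast
    constructor <;> linarith [Int.le_ceil (-t), Int.ceil_lt_add_one (-t)]

lemma norm_pertMat_sub_pow_mulVec_le {n : ℕ} (J : Matrix (Fin n) (Fin n) ℝ) (k : ℕ)
    (v : Fin n → ℝ) : ‖euc ((intMat (pertMat J k) - J ^ k) *ᵥ v)‖ ≤ n ^ 2 * ‖euc v‖ := by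
  have hentry : ∀ i j, |(intMat (pertMat J k) - J ^ k) i j| ≤ 1 := fun i j => by
    simpa [intMat, pertMat] using abs_sceil_sub_le ((J ^ k) i j)
  simpa [sq, euc] using norm_mulVec_le_of_abs_le_one hentry v

/-- crude norm estimates `‖J^{-kl}‖, ‖T_k^{-l}‖ ≤ c'/η^{kl}`. -/
theorem crude_norm_estimates {n s : ℕ} (J : Matrix (Fin n) (Fin n) ℝ)
    (ρ : Fin s → ℝ) (hJ : IsRealJordanLike J ρ) :
    ∃ c' η : ℝ, 0 < c' ∧ 1 < η ∧ ∃ k₀ : ℕ, ∀ k, k₀ ≤ k →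
      IsUnit (intMat (pertMat J k)) ∧
      ∀ l : ℕ, opNorm ((J ^ (k * l))⁻¹) ≤ c' / η ^ (k * l) ∧
        opNorm ((intMat (pertMat J k) ^ l)⁻¹) ≤ c' / η ^ (k * l) := by
  obtain ⟨θ, C, hθ, hC, hJpow⟩ := hJ.exists_expandsBy_pow
  obtain ⟨η, hη, hηθ⟩ := exists_between hθ
  obtain ⟨k₀, hk₀⟩ := eventually_atTop.1 (eventually_pow_add_le_mul_pow hη.le hηθ
    (by positivity : (0 : ℝ) ≤ n ^ 2) (inv_pos.2 hC))
  refine ⟨max C 1, η, by positivity, hη, k₀, fun k hk => ?_⟩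
  have hT : ExpandsBy (fun v => ‖euc v‖) (intMat (pertMat J k)) (η ^ k) := by
    have hpert := (hJpow k).add (norm_pertMat_sub_pow_mulVec_le J k)
    rw [add_sub_cancel] at hpert
    refine hpert.mono ?_ fun _ => norm_nonneg _
    linarith [hk₀ k hk, div_eq_inv_mul (θ ^ k) C]
  refine ⟨hT.isUnit (by positivity), fun l => ⟨?_, ?_⟩⟩
  · calc opNorm (J ^ (k * l))⁻¹ ≤ (θ ^ (k * l) / C)⁻¹ :=
          (hJpow (k * l)).opNorm_inv_le (by positivity)
      _ ≤ max C 1 / η ^ (k * l) := by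
          rw [inv_div]
          gcongr
          exact le_max_left C 1
  · calc opNorm (intMat (pertMat J k) ^ l)⁻¹ ≤ ((η ^ k) ^ l)⁻¹ :=
          (hT.pow (by positivity) l).opNorm_inv_le (by positivity)
      _ ≤ max C 1 / η ^ (k * l) := by
          rw [← pow_mul, inv_eq_one_div]
          gcongr
          exact le_max_right C 1

end FracPert
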